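/- Assume μ is absolutely continuous with respect to Lebesgue measure and c satisfies the twist condition. Let ψ ∈ ℝ^N and λ̃ ∈ Λ satisfy λ̃^j = μ({x ∈ X : −c(x,y_j) − ψ^j = ψ^{c*}(x)}) for every 1 ≤ j ≤ N. Then the pair (ψ^{c*}, ψ) is optimal for the classical Kantorovich dual problem with marginals μ and ν_{λ̃}; that is, −∫_X ψ^{c*} dμ − ⟨λ̃, ψ⟩ = min_{γ ∈ Π(μ, ν_{λ̃})} ∫_{X×Y} c dγ. -/

import Mathlib

open MeasureTheory
open scoped ENNReal BigOperators

noncomputable section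

abbrev Euc (n : ℕ) := EuclideanSpace ℝ (Fin n)

/-- The unit simplex `Λ` in `ℝ^N`. -/
def stdSimplex' (N : ℕ) : Set (Fin N → ℝ) :=
  {l | (∀ j, 0 ≤ l j) ∧ ∑ j, l j = 1}

/-- The discrete measure `ν_λ = ∑_j λ^j δ_{y_j}`. -/
def nuOf {n N : ℕ} (y : Fin N → Euc n) (l : Fin N → ℝ) : Measure (Euc n) :=
  ∑ j, (ENNReal.ofReal (l j)) • Measure.dirac (y j)

/-- `γ ∈ Π(μ, ν)`: `γ` has first marginal `μ` and second marginal `ν`. -/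
def IsCoupling {n : ℕ} (γ : Measure (Euc n × Euc n)) (μ ν : Measure (Euc n)) : Prop :=
  γ.fst = μ ∧ γ.snd = ν

/-- The transport cost `∫ c dγ`. -/
def tCost {n : ℕ} (c : Euc n → Euc n → ℝ) (γ : Measure (Euc n × Euc n)) : ℝ :=
  ∫ p, c p.1 p.2 ∂γ

def dotp {N : ℕ} (a b : Fin N → ℝ) : ℝ := ∑ j, a j * b j

/-- Legendre transform `F*(ψ) = sup_λ (⟨λ, ψ⟩ - F(λ))`. -/
def legendre {N : ℕ} (F : (Fin N → ℝ) → EReal) (ψ : Fin N → ℝ) : EReal :=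
  ⨆ l : Fin N → ℝ, ((dotp l ψ : ℝ) : EReal) - F l

/-- `ψ^{c*}(x) = max_j (-c(x,y_j) - ψ^j)`. -/
def cstar {n N : ℕ} (c : Euc n → Euc n → ℝ) (y : Fin N → Euc n)
    (ψ : Fin N → ℝ) (x : Euc n) : ℝ :=
  ⨆ j : Fin N, (-c x (y j) - ψ j)

/-- `(ψ^{c*c})^j = sup_{x ∈ X} (-c(x,y_j) - ψ^{c*}(x))`. -/
def cstarc {n N : ℕ} (X : Set (Euc n)) (c : Euc n → Euc n → ℝ) (y : Fin N → Euc n)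
    (ψ : Fin N → ℝ) (j : Fin N) : ℝ :=
  ⨆ x ∈ X, (-c x (y j) - cstar c y ψ x)

/-- The primal objective `∫ c dγ + F(λ)`. -/
def primalObj {n N : ℕ} (c : Euc n → Euc n → ℝ) (F : (Fin N → ℝ) → EReal)
    (γ : Measure (Euc n × Euc n)) (l : Fin N → ℝ) : EReal :=
  ((tCost c γ : ℝ) : EReal) + F l

/-- The dual objective `-∫_X φ dμ - F*(ψ)`. -/
def dualObj {n N : ℕ} (X : Set (Euc n)) (μ : Measure (Euc n))
    (F : (Fin N → ℝ) → EReal) (φ : Euc n → ℝ) (ψ : Fin N → ℝ) : EReal :=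
  -(((∫ x in X, φ x ∂μ) : ℝ) : EReal) - legendre F ψ

/-- Admissibility for the dual problem: `φ ∈ C(X)` and `-φ(x) - ψ^j ≤ c(x, y_j)`. -/
def DualAdmissible {n N : ℕ} (X : Set (Euc n)) (c : Euc n → Euc n → ℝ)
    (y : Fin N → Euc n) (φ : Euc n → ℝ) (ψ : Fin N → ℝ) : Prop :=
  ContinuousOn φ X ∧ ∀ x ∈ X, ∀ j, -φ x - ψ j ≤ c x (y j)

/-- `(γ, λ)` is a minimizing pair of the primal problem. -/
def IsPrimalMin {n N : ℕ} (μ : Measure (Euc n)) (c : Euc n → Euc n → ℝ)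
    (y : Fin N → Euc n) (F : (Fin N → ℝ) → EReal)
    (γ : Measure (Euc n × Euc n)) (l : Fin N → ℝ) : Prop :=
  l ∈ stdSimplex' N ∧ IsCoupling γ μ (nuOf y l) ∧
    ∀ l' ∈ stdSimplex' N, ∀ γ', IsCoupling γ' μ (nuOf y l') →
      primalObj c F γ l ≤ primalObj c F γ' l'

/-- `(φ, ψ)` is a maximizing pair of the dual problem. -/
def IsDualMax {n N : ℕ} (X : Set (Euc n)) (μ : Measure (Euc n))
    (c : Euc n → Euc n → ℝ) (y : Fin N → Euc n) (F : (Fin N → ℝ) → EReal)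
    (φ : Euc n → ℝ) (ψ : Fin N → ℝ) : Prop :=
  DualAdmissible X c y φ ψ ∧
    ∀ φ' ψ', DualAdmissible X c y φ' ψ' → dualObj X μ F φ' ψ' ≤ dualObj X μ F φ ψ

/-- `F : ℝ^N → ℝ ∪ {+∞}` is proper, lower semicontinuous and convex. -/
def ProperLscConvex {N : ℕ} (F : (Fin N → ℝ) → EReal) : Prop :=
  LowerSemicontinuous F ∧ (∃ l, F l ≠ ⊤) ∧ (∀ l, F l ≠ ⊥) ∧
    ∀ a b : Fin N → ℝ, ∀ s t : ℝ, 0 ≤ s → 0 ≤ t → s + t = 1 →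
      F (s • a + t • b) ≤ (s : EReal) * F a + (t : EReal) * F b

/-- `F` is finite (real-valued) on the simplex `Λ`. -/
def FiniteOnSimplex {N : ℕ} (F : (Fin N → ℝ) → EReal) : Prop :=
  ∀ l ∈ stdSimplex' N, ∃ r : ℝ, F l = (r : EReal)

/-- The twist condition: `-∇_x c(x₀, y_j) ≠ -∇_x c(x₀, y_k)` for `j ≠ k`. -/
def TwistCond {n N : ℕ} (X : Set (Euc n)) (c : Euc n → Euc n → ℝ)
    (y : Fin N → Euc n) : Prop :=
  ∀ x₀ ∈ X, ∀ j k : Fin N, j ≠ k →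
    -gradient (fun x => c x (y j)) x₀ ≠ -gradient (fun x => c x (y k)) x₀

/-- `C(λ) := min_{γ ∈ Π(μ, ν_λ)} ∫ c dγ`, the optimal transport cost to `ν_λ`. -/
def kantCost {n N : ℕ} (μ : Measure (Euc n)) (c : Euc n → Euc n → ℝ)
    (y : Fin N → Euc n) (l : Fin N → ℝ) : ℝ :=
  sInf {r : ℝ | ∃ γ : Measure (Euc n × Euc n), IsCoupling γ μ (nuOf y l) ∧ r = tCost c γ}

/-- The subdifferential `∂F(λ)`. -/
def subdiff {N : ℕ} (F : (Fin N → ℝ) → EReal) (l : Fin N → ℝ) : Set (Fin N → ℝ) :=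
  {p | ∀ w : Fin N → ℝ, F l + ((dotp (w - l) p : ℝ) : EReal) ≤ F w}

/-!
Every coupling of `μ` and `ν_λ` splits as `∑ⱼ mⱼ ⊗ δ_{yⱼ}` with `∑ⱼ mⱼ = μ` and `mⱼ(X) = λʲ`.
Since `c(x, yⱼ) ≥ -ψ^{c*}(x) - ψʲ`, its cost is at least `-∫ ψ^{c*} dμ - ⟨λ, ψ⟩`, with equality
when every `mⱼ` lives on the Laguerre cell `{-c(·, yⱼ) - ψʲ = ψ^{c*}}`. The cells cover `X`, and
their masses `λ̃ʲ` add up to `1 = μ(X)`, so they overlap only in null sets. Disjointifying them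
and sending the `j`-th piece of `μ` to `yⱼ` therefore gives a coupling of `μ` and `ν_λ̃` that
attains the bound.
-/

namespace MeasureTheory.Measure

variable {α β ι : Type*} [MeasurableSpace α] [MeasurableSpace β] [Fintype ι]

def semidiscretePlan (y : ι → β) (m : ι → Measure α) : Measure (α × β) :=
  ∑ j, (m j).map (fun x => (x, y j))

variable {y : ι → β} {m : ι → Measure α}

lemma semidiscretePlan_fst : (semidiscretePlan y m).fst = ∑ j, m j := by
  rw [semidiscretePlan, Measure.fst, map_finset_sum' measurable_fst.aemeasurable]
  refine Finset.sum_congr rfl fun j _ => ?_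
  rw [map_map measurable_fst measurable_prodMk_right]
  exact map_id

lemma semidiscretePlan_snd : (semidiscretePlan y m).snd = ∑ j, m j Set.univ • dirac (y j) := by
  rw [semidiscretePlan, Measure.snd, map_finset_sum' measurable_snd.aemeasurable]
  refine Finset.sum_congr rfl fun j _ => ?_
  rw [map_map measurable_snd measurable_prodMk_right]
  exact map_const _ _


lemma map_prodMk_fst_of_ae_snd_eq {ρ : Measure (α × β)} {b : β} (h : ∀ᵐ p ∂ρ, p.2 = b) :
    ρ.fst.map (fun x => (x, b)) = ρ := by
  rw [Measure.fst, map_map measurable_prodMk_right measurable_fst]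
  conv_rhs => rw [← map_id (μ := ρ)]
  refine map_congr ?_
  filter_upwards [h] with p hp
  simp [← hp]

lemma eq_semidiscretePlan [MeasurableSingletonClass β] (hy : Function.Injective y)
    {γ : Measure (α × β)} (hγ : ∀ᵐ p ∂γ, p.2 ∈ Set.range y) :
    γ = semidiscretePlan y fun j => (γ.restrict (Prod.snd ⁻¹' {y j})).fst := by
  have hdisj : Pairwise (Function.onFun Disjoint fun j => (Prod.snd ⁻¹' {y j} : Set (α × β))) :=
    fun i j hij => (Set.disjoint_singleton.mpr (hy.ne hij)).preimage _
  calc γ = γ.restrict (⋃ j, Prod.snd ⁻¹' {y j}) := by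
        rw [← Set.preimage_iUnion, Set.iUnion_singleton_eq_range,
          restrict_eq_self_of_ae_mem (s := Prod.snd ⁻¹' Set.range y) hγ]
    _ = ∑ j, γ.restrict (Prod.snd ⁻¹' {y j}) := by
        rw [restrict_iUnion hdisj fun j => measurable_snd (measurableSet_singleton _),
          sum_fintype]
    _ = _ := by
        refine Finset.sum_congr rfl fun j _ => (map_prodMk_fst_of_ae_snd_eq ?_).symm
        exact (ae_restrict_mem (measurable_snd (measurableSet_singleton _))).mono fun p hp => hp


lemma integral_semidiscretePlan [MeasurableSingletonClass β] {E : Type*} [NormedAddCommGroup E]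
    [NormedSpace ℝ E] {f : α → β → E} (hf : ∀ j, Integrable (fun x => f x (y j)) (m j)) :
    ∫ p, f p.1 p.2 ∂semidiscretePlan y m = ∑ j, ∫ x, f x (y j) ∂m j := by
  rw [semidiscretePlan, integral_finsetSum_measure fun j _ =>
    (measurableEmbedding_prod_mk_right (y j)).integrable_map_iff.mpr (hf j)]
  exact Finset.sum_congr rfl fun j _ =>
    (measurableEmbedding_prod_mk_right (y j)).integral_map (fun p => f p.1 p.2)

end MeasureTheory.Measure

section Coupling

open Measure

variable {n N : ℕ} {y : Fin N → Euc n} {l : Fin N → ℝ}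

lemma nuOf_singleton (hy : Function.Injective y) (j : Fin N) :
    nuOf y l {y j} = ENNReal.ofReal (l j) := by
  simp [nuOf, finsetSum_apply, hy.eq_iff, Set.indicator_apply]

lemma ae_mem_range_nuOf : ∀ᵐ b ∂nuOf y l, b ∈ Set.range y := by
  simp [nuOf, ae_iff, finsetSum_apply]

lemma isCoupling_semidiscretePlan {μ : Measure (Euc n)} {m : Fin N → Measure (Euc n)}
    (hm : ∑ j, m j = μ) (hm_univ : ∀ j, m j Set.univ = ENNReal.ofReal (l j)) :
    IsCoupling (semidiscretePlan y m) μ (nuOf y l) := by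
  refine ⟨semidiscretePlan_fst.trans hm, semidiscretePlan_snd.trans ?_⟩
  simp only [nuOf, hm_univ]

lemma IsCoupling.exists_eq_semidiscretePlan (hy : Function.Injective y)
    {γ : Measure (Euc n × Euc n)} {μ : Measure (Euc n)} (hγ : IsCoupling γ μ (nuOf y l)) :
    ∃ m : Fin N → Measure (Euc n), γ = semidiscretePlan y m ∧ ∑ j, m j = μ ∧
      ∀ j, m j Set.univ = ENNReal.ofReal (l j) := by
  have hrange : ∀ᵐ p ∂γ, p.2 ∈ Set.range y := by
    refine ae_of_ae_map measurable_snd.aemeasurable ?_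
    rw [← Measure.snd, hγ.2]
    exact ae_mem_range_nuOf
  have heq := eq_semidiscretePlan hy hrange
  refine ⟨_, heq, ?_, fun j => ?_⟩
  · rw [← semidiscretePlan_fst (y := y), ← heq, hγ.1]
  · rw [fst_univ (ρ := γ.restrict _), restrict_apply_univ,
      ← snd_apply (measurableSet_singleton _), hγ.2, nuOf_singleton hy]

end Coupling

section Disjointed

variable {α ι : Type*} [MeasurableSpace α] [Fintype ι] [LinearOrder ι] [LocallyFiniteOrderBot ι]
  {A : ι → Set α}

lemma measurableSet_disjointed (hA : ∀ j, MeasurableSet (A j)) (j : ι) :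
    MeasurableSet (disjointed A j) := by
  rw [disjointed_eq_inter_compl]
  exact (hA j).inter (.iInter fun k => .iInter fun _ => (hA k).compl)

lemma measureReal_disjointed_eq_of_sum_le {μ : Measure α} [IsFiniteMeasure μ]
    (hA : ∀ j, MeasurableSet (A j)) (hsum : ∑ j, μ.real (A j) ≤ μ.real (⋃ j, A j)) (j : ι) :
    μ.real (disjointed A j) = μ.real (A j) := by
  have hle : ∀ j ∈ Finset.univ, μ.real (disjointed A j) ≤ μ.real (A j) :=
    fun j _ => measureReal_mono (disjointed_subset A j)
  have hsum_eq : ∑ j, μ.real (disjointed A j) = ∑ j, μ.real (A j) := by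
    refine le_antisymm (Finset.sum_le_sum hle) ?_
    rwa [← measureReal_iUnion_fintype (disjoint_disjointed A) (measurableSet_disjointed hA),
      iUnion_disjointed]
  exact (Finset.sum_eq_sum_iff_of_le hle).mp hsum_eq j (Finset.mem_univ j)

end Disjointed

lemma ContinuousOn.integrable_of_compl_null {α E : Type*} [TopologicalSpace α] [MeasurableSpace α]
    [OpensMeasurableSpace α] [T2Space α] [NormedAddCommGroup E] {μ : Measure α} [IsFiniteMeasure μ]
    {K : Set α} {f : α → E} (hf : ContinuousOn f K) (hK : IsCompact K) (hμK : μ Kᶜ = 0) :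
    Integrable f μ := by
  rw [← Measure.restrict_eq_self_of_ae_mem (s := K) (mem_ae_iff.mpr hμK)]
  exact hf.integrableOn_compact hK

section CTransform

open Measure

variable {n N : ℕ} {X : Set (Euc n)} {μ : Measure (Euc n)} {c : Euc n → Euc n → ℝ}
  {y : Fin N → Euc n} {ψ : Fin N → ℝ}

def laguerreCell (X : Set (Euc n)) (c : Euc n → Euc n → ℝ) (y : Fin N → Euc n)
    (ψ : Fin N → ℝ) (j : Fin N) : Set (Euc n) :=
  {x ∈ X | -c x (y j) - ψ j = cstar c y ψ x}

lemma le_cstar (x : Euc n) (j : Fin N) : -c x (y j) - ψ j ≤ cstar c y ψ x :=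
  le_ciSup (f := fun j => -c x (y j) - ψ j) (Finite.bddAbove_range _) j

variable [Nonempty (Fin N)]

lemma exists_eq_cstar (x : Euc n) : ∃ j, -c x (y j) - ψ j = cstar c y ψ x :=
  exists_eq_ciSup_of_finite (f := fun j => -c x (y j) - ψ j)

lemma continuousOn_cstar (hc : ∀ j, ContinuousOn (fun x => c x (y j)) X) :
    ContinuousOn (cstar c y ψ) X := by
  have h : ContinuousOn (fun x => Finset.univ.sup' Finset.univ_nonempty
      fun j => -c x (y j) - ψ j) X :=
    .finset_sup'_apply _ fun j _ => (hc j).neg.sub continuousOn_const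
  simp only [Finset.sup'_univ_eq_ciSup] at h
  exact h

lemma isClosed_laguerreCell (hX : IsClosed X) (hc : ∀ j, ContinuousOn (fun x => c x (y j)) X)
    (j : Fin N) : IsClosed (laguerreCell X c y ψ j) := by
  have hcont : ContinuousOn (fun x => -c x (y j) - ψ j - cstar c y ψ x) X :=
    ((hc j).neg.sub continuousOn_const).sub (continuousOn_cstar hc)
  have h := hcont.preimage_isClosed_of_isClosed hX (isClosed_singleton (x := 0))
  convert h using 1
  ext x
  simp [laguerreCell, sub_eq_zero]

lemma iUnion_laguerreCell : ⋃ j, laguerreCell X c y ψ j = X := by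
  refine Set.Subset.antisymm (Set.iUnion_subset fun j => Set.sep_subset _ _) fun x hx => ?_
  obtain ⟨j, hj⟩ := exists_eq_cstar (c := c) (y := y) (ψ := ψ) x
  exact Set.mem_iUnion.mpr ⟨j, hx, hj⟩

def laguerrePlan (μ : Measure (Euc n)) (X : Set (Euc n)) (c : Euc n → Euc n → ℝ)
    (y : Fin N → Euc n) (ψ : Fin N → ℝ) : Measure (Euc n × Euc n) :=
  semidiscretePlan y fun j => μ.restrict (disjointed (laguerreCell X c y ψ) j)

lemma sum_restrict_disjointed_laguerreCell (hX : IsClosed X) (hμX : μ Xᶜ = 0)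
    (hc : ∀ j, ContinuousOn (fun x => c x (y j)) X) :
    ∑ j, μ.restrict (disjointed (laguerreCell X c y ψ) j) = μ := by
  have hmeas := measurableSet_disjointed fun j =>
    (isClosed_laguerreCell (ψ := ψ) hX hc j).measurableSet
  rw [← sum_fintype, ← restrict_iUnion (disjoint_disjointed _) hmeas, iUnion_disjointed,
    iUnion_laguerreCell, restrict_eq_self_of_ae_mem (mem_ae_iff.mpr hμX)]

end CTransform

section Duality

open Measure

variable {n N : ℕ} {X : Set (Euc n)} {μ : Measure (Euc n)} [IsFiniteMeasure μ]
  {c : Euc n → Euc n → ℝ} {y : Fin N → Euc n} {ψ : Fin N → ℝ} [Nonempty (Fin N)]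

lemma tCost_semidiscretePlan (hX : IsCompact X) (hμX : μ Xᶜ = 0)
    (hc : ∀ j, ContinuousOn (fun x => c x (y j)) X) {m : Fin N → Measure (Euc n)}
    (hm : ∑ j, m j = μ) :
    tCost c (semidiscretePlan y m) = -(∫ x in X, cstar c y ψ x ∂μ) -
      ∑ j, (m j).real Set.univ * ψ j + ∑ j, ∫ x, (c x (y j) + ψ j + cstar c y ψ x) ∂m j := by
  have hle : ∀ j, m j ≤ μ := fun j => hm ▸ Finset.single_le_sum (fun _ _ => Measure.zero_le _)
    (Finset.mem_univ j)
  have hint : ∀ j {f : Euc n → ℝ}, ContinuousOn f X → Integrable f (m j) := fun j _ hf =>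
    have := isFiniteMeasure_of_le μ (hle j)
    hf.integrable_of_compl_null hX (absolutelyContinuous_of_le (hle j) hμX)
  have hcstar : ∑ j, ∫ x, cstar c y ψ x ∂m j = ∫ x in X, cstar c y ψ x ∂μ := by
    rw [← integral_finsetSum_measure fun j _ => hint j (continuousOn_cstar hc), hm,
      restrict_eq_self_of_ae_mem (mem_ae_iff.mpr hμX)]
  have hsplit : ∀ j, ∫ x, (c x (y j) + ψ j + cstar c y ψ x) ∂m j =
      ∫ x, c x (y j) ∂m j + (m j).real Set.univ * ψ j + ∫ x, cstar c y ψ x ∂m j := fun j => by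
    have hcψ : Integrable (fun x => c x (y j) + ψ j) (m j) :=
      (hint j (hc j)).add (hint j continuousOn_const)
    rw [integral_add hcψ (hint j (continuousOn_cstar hc)),
      integral_add (hint j (hc j)) (hint j continuousOn_const), integral_const, smul_eq_mul]
  rw [tCost, integral_semidiscretePlan fun j => hint j (hc j)]
  simp only [hsplit, Finset.sum_add_distrib, hcstar]
  ring

lemma le_tCost_of_isCoupling (hX : IsCompact X) (hμX : μ Xᶜ = 0)
    (hc : ∀ j, ContinuousOn (fun x => c x (y j)) X) (hy : Function.Injective y)
    {l : Fin N → ℝ} (hl : ∀ j, 0 ≤ l j) {γ : Measure (Euc n × Euc n)}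
    (hγ : IsCoupling γ μ (nuOf y l)) :
    -(∫ x in X, cstar c y ψ x ∂μ) - dotp l ψ ≤ tCost c γ := by
  obtain ⟨m, rfl, hm, hm_univ⟩ := hγ.exists_eq_semidiscretePlan hy
  have hgap : 0 ≤ ∑ j, ∫ x, (c x (y j) + ψ j + cstar c y ψ x) ∂m j :=
    Finset.sum_nonneg fun j _ => integral_nonneg fun x => by
      simp only [Pi.zero_apply]
      linarith [le_cstar (c := c) (y := y) (ψ := ψ) x j]
  rw [tCost_semidiscretePlan hX hμX hc hm]
  simp only [measureReal_def, hm_univ, ENNReal.toReal_ofReal (hl _), dotp]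
  linarith

lemma tCost_laguerrePlan (hX : IsCompact X) (hμX : μ Xᶜ = 0)
    (hc : ∀ j, ContinuousOn (fun x => c x (y j)) X) :
    tCost c (laguerrePlan μ X c y ψ) = -(∫ x in X, cstar c y ψ x ∂μ) -
      ∑ j, μ.real (disjointed (laguerreCell X c y ψ) j) * ψ j := by
  have hgap : ∀ j, ∫ x in disjointed (laguerreCell X c y ψ) j,
      (c x (y j) + ψ j + cstar c y ψ x) ∂μ = 0 := fun j =>
    setIntegral_eq_zero_of_forall_eq_zero fun x hx => by
      linarith [(disjointed_subset _ j hx).2]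
  rw [laguerrePlan, tCost_semidiscretePlan (ψ := ψ) hX hμX hc
    (sum_restrict_disjointed_laguerreCell hX.isClosed hμX hc)]
  simp only [hgap, measureReal_restrict_apply_univ, Finset.sum_const_zero, add_zero]

end Duality

theorem ctransform_pair_is_kantorovich_dual_optimal_general {n N : ℕ} (hN : 0 < N)
    (X : Set (Euc n)) (hX : IsCompact X)
    (μ : Measure (Euc n)) [IsProbabilityMeasure μ] (hμX : μ Xᶜ = 0)
    (y : Fin N → Euc n) (hy : Function.Injective y)
    (c : Euc n → Euc n → ℝ) (hc : ∀ j, ContinuousOn (fun x => c x (y j)) X)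
    (ψ : Fin N → ℝ) (lt : Fin N → ℝ) (hltΛ : lt ∈ stdSimplex' N)
    (hlt : ∀ j, lt j = (μ {x ∈ X | -c x (y j) - ψ j = cstar c y ψ x}).toReal) :
    (∃ γ : Measure (Euc n × Euc n), IsCoupling γ μ (nuOf y lt) ∧
      tCost c γ = kantCost μ c y lt) ∧
    -(∫ x in X, cstar c y ψ x ∂μ) - dotp lt ψ = kantCost μ c y lt := by
  have : Nonempty (Fin N) := Fin.pos_iff_nonempty.mp hN
  set D := -(∫ x in X, cstar c y ψ x ∂μ) - dotp lt ψ
  have hcell_real : ∀ j, μ.real (disjointed (laguerreCell X c y ψ) j) = lt j := by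
    refine fun j => (measureReal_disjointed_eq_of_sum_le
      (fun j => (isClosed_laguerreCell hX.isClosed hc j).measurableSet) ?_ j).trans (hlt j).symm
    rw [iUnion_laguerreCell, measureReal_def,
      (prob_compl_eq_zero_iff hX.isClosed.measurableSet).mp hμX]
    simp [laguerreCell, measureReal_def, ← hlt, hltΛ.2]
  have hγ : IsCoupling (laguerrePlan μ X c y ψ) μ (nuOf y lt) :=
    isCoupling_semidiscretePlan (sum_restrict_disjointed_laguerreCell hX.isClosed hμX hc)
      fun j => by rw [Measure.restrict_apply_univ, ← hcell_real j, ofReal_measureReal]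
  have hcost : tCost c (laguerrePlan μ X c y ψ) = D := by
    simp only [tCost_laguerrePlan hX hμX hc, hcell_real, D, dotp]
  have hleast : IsLeast {r | ∃ γ, IsCoupling γ μ (nuOf y lt) ∧ r = tCost c γ} D :=
    ⟨⟨_, hγ, hcost.symm⟩, by
      rintro _ ⟨γ, hγ, rfl⟩
      exact le_tCost_of_isCoupling hX hμX hc hy hltΛ.1 hγ⟩
  have hkant : kantCost μ c y lt = D := hleast.csInf_eq
  exact ⟨⟨_, hγ, hcost.trans hkant.symm⟩, hkant.symm⟩

/-- If `λ̃^j = μ({-c(·,y_j) - ψ^j = ψ^{c*}})` for all `j`, then `(ψ^{c*}, ψ)` is optimal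
in the classical Kantorovich dual problem: `-∫_X ψ^{c*} dμ - ⟨λ̃, ψ⟩` equals the
(attained) minimal transport cost between `μ` and `ν_{λ̃}`. -/
theorem ctransform_pair_is_kantorovich_dual_optimal {n N : ℕ} (hN : 0 < N)
    (X : Set (Euc n)) (hX : IsCompact X)
    (μ : Measure (Euc n)) [IsProbabilityMeasure μ] (hμX : μ Xᶜ = 0)
    (y : Fin N → Euc n) (hy : Function.Injective y)
    (c : Euc n → Euc n → ℝ) (hc : ∀ j, ContinuousOn (fun x => c x (y j)) X)
    (hc1 : ∀ j, ContDiffOn ℝ 1 (fun x => c x (y j)) X)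
    (htwist : TwistCond X c y) (hac : μ ≪ volume)
    (ψ : Fin N → ℝ) (lt : Fin N → ℝ) (hltΛ : lt ∈ stdSimplex' N)
    (hlt : ∀ j, lt j = (μ {x ∈ X | -c x (y j) - ψ j = cstar c y ψ x}).toReal) :
    (∃ γ : Measure (Euc n × Euc n), IsCoupling γ μ (nuOf y lt) ∧
      tCost c γ = kantCost μ c y lt) ∧
    -(∫ x in X, cstar c y ψ x ∂μ) - dotp lt ψ = kantCost μ c y lt :=
  ctransform_pair_is_kantorovich_dual_optimal_general hN X hX μ hμX y hy c hc ψ lt hltΛ hlt
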